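/- arXiv:2401.14644 — 2 statements merged into one kernel-verified Lean document; each statement's English description precedes it below -/
import Mathlib

section
/- The Jacobson radical of the ring K¹𝒫 equals the K-linear span of {B_{ji} : i ≺ j in 𝒫}; the matrices B_{ji} with i ≺ j and i ≠ m(j) form a K-basis of this radical; and K¹𝒫 is the internal direct sum of the K-linear span of {ε₀} ∪ {ε_j : j ∈ 𝒫'} and its Jacobson radical. -/
open Matrix

/-- A finite poset structure on `{1,…,n}` (modeled as `Fin n`) whose order
relation refines the natural linear order. -/
structure PosetOn (n : ℕ) where
  le : Fin n → Fin n → Prop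
  le_refl : ∀ i, le i i
  le_trans : ∀ {i j k : Fin n}, le i j → le j k → le i k
  le_compat : ∀ {i j : Fin n}, le i j → i ≤ j

/-- The strict order `i ≺ j`. -/
def PosetOn.lt {n : ℕ} (P : PosetOn n) (i j : Fin n) : Prop := P.le i j ∧ i ≠ j

/-- `i` is a minimal element of `𝒫`. -/
def PosetOn.IsMin {n : ℕ} (P : PosetOn n) (i : Fin n) : Prop := ∀ j, P.le j i → j = i

/-- A minimal marking of `𝒫`. -/
structure MinimalMarking {n : ℕ} (P : PosetOn n) where
  m : Fin n → Fin n
  isMin : ∀ j, P.IsMin (m j)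
  le : ∀ j, P.le (m j) j

/-- The incidence algebra `K𝒫` as a set of `n × n` matrices. -/
def KPset (K : Type) [Field K] {n : ℕ} (P : PosetOn n) : Set (Matrix (Fin n) (Fin n) K) :=
  {M | ∀ j i, M j i ≠ 0 → P.le i j}

/-- The row-balanced incidence algebra `K¹𝒫`. -/
def KPoneSet (K : Type) [Field K] {n : ℕ} (P : PosetOn n) : Set (Matrix (Fin n) (Fin n) K) :=
  {M | M ∈ KPset K P ∧ ∃ c : K, M *ᵥ (fun _ => 1) = fun _ => c}

/-- `B_{ji} := E_{ji} − E_{j m(j)}`. -/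
def Bmat (K : Type) [Field K] {n : ℕ} (P : PosetOn n) (mk : MinimalMarking P) (j i : Fin n) :
    Matrix (Fin n) (Fin n) K :=
  single j i 1 - single j (mk.m j) 1

/-- The set `{B_{ji} : i ≺ j}`. -/
def BSet (K : Type) [Field K] {n : ℕ} (P : PosetOn n) (mk : MinimalMarking P) :
    Set (Matrix (Fin n) (Fin n) K) :=
  {M | ∃ i j, P.lt i j ∧ M = Bmat K P mk j i}

/-- `ε_j := E_{jj} − E_{j m(j)}`. -/
def epsMat (K : Type) [Field K] {n : ℕ} (P : PosetOn n) (mk : MinimalMarking P) (j : Fin n) :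
    Matrix (Fin n) (Fin n) K :=
  single j j 1 - single j (mk.m j) 1

/-- `ε₀ := Id_n − Σ_{j ∈ 𝒫'} ε_j`. -/
noncomputable def eps0Mat (K : Type) [Field K] {n : ℕ} (P : PosetOn n) (mk : MinimalMarking P) :
    Matrix (Fin n) (Fin n) K :=
  letI := Classical.decPred fun j : Fin n => P.IsMin j
  1 - ∑ j ∈ Finset.univ.filter (fun j : Fin n => ¬ P.IsMin j), epsMat K P mk j

/-- The set `{ε₀} ∪ {ε_j : j ∈ 𝒫'}`. -/
def idemSet (K : Type) [Field K] {n : ℕ} (P : PosetOn n) (mk : MinimalMarking P) :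
    Set (Matrix (Fin n) (Fin n) K) :=
  insert (eps0Mat K P mk) {M | ∃ j, ¬ P.IsMin j ∧ M = epsMat K P mk j}

/-- The matrices `B_{ji}` with `i ≺ j` and `i ≠ m(j)`, as a family. -/
def Bfam (K : Type) [Field K] {n : ℕ} (P : PosetOn n) (mk : MinimalMarking P)
    (q : {p : Fin n × Fin n // P.lt p.1 p.2 ∧ p.1 ≠ mk.m p.2}) : Matrix (Fin n) (Fin n) K :=
  Bmat K P mk q.1.2 q.1.1

/-!
The diagonal entries `M ↦ M j j` are characters of `K¹𝒫`, since incidence matrices multiply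
diagonally; hence the Jacobson radical lies in the subspace of zero-diagonal elements of `K¹𝒫`.
Conversely, that subspace is a left ideal of strictly lower triangular, hence nilpotent, matrices,
so it lies in the radical. Its elements have zero row sums (the common row sum is the diagonal
entry in the row of a minimal element), so subtracting `(Σ_b M_{ab}) E_{a m(a)} = 0` from each row
writes them in terms of the `B_{ab}`. Finally `M ↦ M₀₀ ε₀ + Σ_{j ∈ 𝒫'} M_{jj} ε_j` is a projection
onto `span {ε₀, ε_j}` that kills the radical, and `M - (M₀₀ ε₀ + …)` has zero diagonal for
`M ∈ K¹𝒫`, because `M₀₀` is the common row sum (`0` being minimal).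
-/

namespace PosetOn

variable {n : ℕ} (P : PosetOn n)

theorem le_antisymm {i j : Fin n} (hij : P.le i j) (hji : P.le j i) : i = j :=
  _root_.le_antisymm (P.le_compat hij) (P.le_compat hji)

theorem not_isMin_of_lt {i j : Fin n} (h : P.lt i j) : ¬ P.IsMin j :=
  fun hj => h.2 (hj i h.1)

theorem isMin_zero (hn : 0 < n) : P.IsMin ⟨0, hn⟩ :=
  fun _ hk => Fin.ext (Nat.le_zero.mp (P.le_compat hk))

variable {P} in
theorem lt.fin_lt {i j : Fin n} (h : P.lt i j) : i < j :=
  lt_of_le_of_ne (P.le_compat h.1) h.2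

end PosetOn

theorem MinimalMarking.m_ne_self {n : ℕ} {P : PosetOn n} (mk : MinimalMarking P) {j : Fin n}
    (hj : ¬ P.IsMin j) : mk.m j ≠ j :=
  fun h => hj (h ▸ mk.isMin j)

section IncidenceAlgebra

variable {K : Type} [Field K] {n : ℕ} {P : PosetOn n}

theorem mul_mem_KPset {A B : Matrix (Fin n) (Fin n) K} (hA : A ∈ KPset K P)
    (hB : B ∈ KPset K P) : A * B ∈ KPset K P := by
  intro j i hji
  rw [mul_apply] at hji
  obtain ⟨k, -, hk⟩ := Finset.exists_ne_zero_of_sum_ne_zero hji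
  exact P.le_trans (hB k i (right_ne_zero_of_mul hk)) (hA j k (left_ne_zero_of_mul hk))

theorem mul_apply_self_of_mem_KPset {A B : Matrix (Fin n) (Fin n) K} (hA : A ∈ KPset K P)
    (hB : B ∈ KPset K P) (j : Fin n) : (A * B) j j = A j j * B j j := by
  refine Finset.sum_eq_single j (fun k _ hkj => ?_) (fun h => absurd (Finset.mem_univ j) h)
  by_contra hk
  exact hkj (P.le_antisymm (hA j k (left_ne_zero_of_mul hk)) (hB k j (right_ne_zero_of_mul hk)))

theorem mulVec_one_apply_of_isMin {M : Matrix (Fin n) (Fin n) K} (hM : M ∈ KPset K P)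
    {a : Fin n} (ha : P.IsMin a) : (M *ᵥ fun _ => 1) a = M a a := by
  simp only [mulVec, dotProduct, mul_one]
  refine Finset.sum_eq_single a (fun b _ hba => ?_) (fun h => absurd (Finset.mem_univ a) h)
  by_contra hb
  exact hba (ha b (hM a b hb))

variable (K P) in
def KPone : Subalgebra K (Matrix (Fin n) (Fin n) K) where
  carrier := KPoneSet K P
  mul_mem' := by
    rintro A B ⟨hA, a, ha⟩ ⟨hB, b, hb⟩
    refine ⟨mul_mem_KPset hA hB, b * a, ?_⟩
    have hconst : (fun _ : Fin n => b) = b • fun _ => (1 : K) := by ext; simp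
    rw [← mulVec_mulVec, hb, hconst, mulVec_smul, ha]
    ext; simp
  add_mem' := by
    rintro A B ⟨hA, a, ha⟩ ⟨hB, b, hb⟩
    refine ⟨fun j i hji => ?_, a + b, by rw [add_mulVec, ha, hb]; rfl⟩
    by_cases hAji : A j i = 0
    · exact hB j i (by simpa [hAji] using hji)
    · exact hA j i hAji
  algebraMap_mem' c := by
    refine ⟨fun j i hji => ?_, c, ?_⟩
    · have hij : j = i := by
        by_contra h
        simp [Algebra.algebraMap_eq_smul_one, one_apply_ne h] at hji
      exact hij ▸ P.le_refl j
    · ext; simp [Algebra.algebraMap_eq_smul_one, smul_mulVec, one_mulVec]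

end IncidenceAlgebra

theorem Matrix.pow_eq_zero_of_strictlyLowerTriangular {R : Type*} [Semiring R] {n : ℕ}
    (M : Matrix (Fin n) (Fin n) R)
    (hM : ∀ j i, M j i ≠ 0 → i < j) : M ^ n = 0 := by
  have key : ∀ (k : ℕ) (a b : Fin n), (a : ℕ) < b + k → (M ^ k) a b = 0 := by
    intro k
    induction k with
    | zero =>
      intro a b h
      rw [pow_zero, one_apply_ne (by rintro rfl; omega)]
    | succ k ih =>
      intro a b h
      rw [pow_succ, mul_apply]
      refine Finset.sum_eq_zero fun l _ => ?_
      by_cases hMl : M l b = 0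
      · rw [hMl, mul_zero]
      · have hbl : (b : ℕ) < l := hM l b hMl
        rw [ih a l (by omega), zero_mul]
  ext a b
  exact key n a b (by omega)

theorem AlgHom.apply_eq_zero_of_mem_jacobson_bot {K R : Type*} [Field K] [Ring R] [Algebra K R]
    (φ : R →ₐ[K] K) {x : R} (hx : x ∈ Ideal.jacobson (⊥ : Ideal R)) : φ x = 0 := by
  have hmax : (RingHom.ker φ).IsMaximal :=
    RingHom.ker_isMaximal_of_surjective φ fun c => ⟨algebraMap K R c, φ.commutes c⟩
  exact Ideal.mem_sInf.mp hx ⟨bot_le, hmax⟩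

theorem Ideal.mem_jacobson_bot_of_isNilpotent_mul {R : Type*} [Ring R] {x : R}
    (h : ∀ y, IsNilpotent (y * x)) : x ∈ Ideal.jacobson (⊥ : Ideal R) := by
  refine Ideal.mem_jacobson_iff.mpr fun y => ?_
  obtain ⟨u, hu⟩ := (h y).isUnit_add_one
  refine ⟨↑u⁻¹, ?_⟩
  rw [Ideal.mem_bot, mul_assoc, ← mul_add_one, ← hu, Units.inv_mul, sub_self]

section Radical

variable (K : Type) [Field K] {n : ℕ} (P : PosetOn n)

def KPoneRad : Submodule K (Matrix (Fin n) (Fin n) K) :=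
  Subalgebra.toSubmodule (KPone K P) ⊓ LinearMap.ker (diagLinearMap (Fin n) K K)

variable {K P}

theorem mem_KPoneRad {M : Matrix (Fin n) (Fin n) K} :
    M ∈ KPoneRad K P ↔ M ∈ KPone K P ∧ ∀ a, M a a = 0 := by
  simp [KPoneRad, funext_iff]

theorem lt_of_mem_KPoneRad {M : Matrix (Fin n) (Fin n) K} (hM : M ∈ KPoneRad K P) {j i : Fin n}
    (hji : M j i ≠ 0) : P.lt i j := by
  obtain ⟨⟨hsupp, -⟩, hdiag⟩ := mem_KPoneRad.mp hM
  exact ⟨hsupp j i hji, by rintro rfl; exact hji (hdiag i)⟩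

theorem mulVec_one_eq_zero_of_mem_KPoneRad (mk : MinimalMarking P)
    {M : Matrix (Fin n) (Fin n) K} (hM : M ∈ KPoneRad K P) : (M *ᵥ fun _ => 1) = 0 := by
  obtain ⟨⟨hsupp, c, hc⟩, hdiag⟩ := mem_KPoneRad.mp hM
  ext a
  have hrow := congrFun hc (mk.m a)
  rw [mulVec_one_apply_of_isMin hsupp (mk.isMin a), hdiag] at hrow
  rw [hc, ← hrow]
  rfl

theorem mul_mem_KPoneRad {A M : Matrix (Fin n) (Fin n) K} (hA : A ∈ KPone K P)
    (hM : M ∈ KPoneRad K P) : A * M ∈ KPoneRad K P := by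
  obtain ⟨hMK, hdiag⟩ := mem_KPoneRad.mp hM
  refine mem_KPoneRad.mpr ⟨mul_mem hA hMK, fun a => ?_⟩
  rw [mul_apply_self_of_mem_KPset hA.1 hMK.1, hdiag, mul_zero]

variable (K P)

def diagAlgHom (j : Fin n) : KPone K P →ₐ[K] K where
  toFun x := (x : Matrix (Fin n) (Fin n) K) j j
  map_one' := one_apply_eq j
  map_mul' x y := mul_apply_self_of_mem_KPset x.2.1 y.2.1 j
  map_zero' := rfl
  map_add' _ _ := rfl
  commutes' c := by simp [Algebra.algebraMap_eq_smul_one]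

theorem mem_jacobson_bot_KPone_iff (x : KPone K P) :
    x ∈ Ideal.jacobson (⊥ : Ideal (KPone K P)) ↔
      (x : Matrix (Fin n) (Fin n) K) ∈ KPoneRad K P := by
  refine ⟨fun hx => mem_KPoneRad.mpr ⟨x.2, fun j =>
    (diagAlgHom K P j).apply_eq_zero_of_mem_jacobson_bot hx⟩, fun hx => ?_⟩
  refine Ideal.mem_jacobson_bot_of_isNilpotent_mul fun y => ?_
  have hyx : ((y * x : KPone K P) : Matrix (Fin n) (Fin n) K) ∈ KPoneRad K P :=
    mul_mem_KPoneRad y.2 hx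
  refine (IsNilpotent.map_iff (f := (KPone K P).val) Subtype.val_injective).mp ⟨n, ?_⟩
  exact pow_eq_zero_of_strictlyLowerTriangular _ fun j i hji =>
    (lt_of_mem_KPoneRad hyx hji).fin_lt

end Radical

abbrev BfamIndex {n : ℕ} (P : PosetOn n) (mk : MinimalMarking P) : Type :=
  {p : Fin n × Fin n // P.lt p.1 p.2 ∧ p.1 ≠ mk.m p.2}

section Generators

variable (K : Type) [Field K] {n : ℕ} (P : PosetOn n) (mk : MinimalMarking P)

theorem single_sub_single_m_mem_KPone {i j : Fin n} (hij : P.le i j) :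
    single j i (1 : K) - single j (mk.m j) 1 ∈ KPone K P := by
  refine ⟨fun a b hab => ?_, 0, ?_⟩
  · by_cases h₁ : j = a ∧ i = b
    · obtain ⟨rfl, rfl⟩ := h₁
      exact hij
    · by_cases h₂ : j = a ∧ mk.m j = b
      · obtain ⟨rfl, rfl⟩ := h₂
        exact mk.le j
      · simp [h₁, h₂] at hab
  · ext a
    simp [sub_mulVec, single_mulVec]

theorem Bmat_mem_KPoneRad {i j : Fin n} (hij : P.lt i j) : Bmat K P mk j i ∈ KPoneRad K P := by
  refine mem_KPoneRad.mpr ⟨single_sub_single_m_mem_KPone K P mk hij.1, fun a => ?_⟩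
  have hm : mk.m j ≠ j := mk.m_ne_self (P.not_isMin_of_lt hij)
  have h₁ : ¬ (j = a ∧ i = a) := by rintro ⟨rfl, rfl⟩; exact hij.2 rfl
  have h₂ : ¬ (j = a ∧ mk.m j = a) := by rintro ⟨rfl, h⟩; exact hm h
  simp [Bmat, h₁, h₂]

theorem span_BSet_eq : Submodule.span K (BSet K P mk) = KPoneRad K P := by
  refine le_antisymm (Submodule.span_le.mpr ?_) fun M hM => ?_
  · rintro _ ⟨i, j, hij, rfl⟩
    exact Bmat_mem_KPoneRad K P mk hij
  have hrow : ∀ a, ∑ b, M a b = 0 := fun a => by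
    simpa [mulVec, dotProduct] using congrFun (mulVec_one_eq_zero_of_mem_KPoneRad mk hM) a
  have hexpand : ∑ a, ∑ b, M a b • Bmat K P mk a b = M := by
    conv_rhs => rw [matrix_eq_sum_single M]
    refine Finset.sum_congr rfl fun a _ => ?_
    simp only [Bmat, smul_sub, Finset.sum_sub_distrib]
    rw [← Finset.sum_smul, hrow, zero_smul, sub_zero]
    simp only [smul_single, smul_eq_mul, mul_one]
  rw [← hexpand]
  refine Submodule.sum_mem _ fun a _ => Submodule.sum_mem _ fun b _ => ?_
  by_cases hab : M a b = 0
  · simp [hab]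
  · exact Submodule.smul_mem _ _ (Submodule.subset_span ⟨b, a, lt_of_mem_KPoneRad hM hab, rfl⟩)

theorem Bfam_apply (q q' : BfamIndex P mk) :
    Bfam K P mk q q'.1.2 q'.1.1 = if q = q' then 1 else 0 := by
  obtain ⟨⟨i, j⟩, hq⟩ := q
  obtain ⟨⟨i', j'⟩, hq'⟩ := q'
  have hm : ¬ (j = j' ∧ mk.m j = i') := by
    rintro ⟨rfl, h⟩
    exact hq'.2 h.symm
  simp [Bfam, Bmat, single_apply, hm, and_comm]

theorem linearIndependent_Bfam : LinearIndependent K (Bfam K P mk) := by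
  refine LinearIndependent.of_comp
    (LinearMap.pi fun q : BfamIndex P mk => entryLinearMap K K q.1.2 q.1.1) ?_
  classical
  convert Pi.linearIndependent_single_one (BfamIndex P mk) K using 1
  · ext q q'
    simp [Bfam_apply, Pi.single_apply, eq_comm]
  · rfl

theorem span_range_Bfam :
    Submodule.span K (Set.range (Bfam K P mk)) = Submodule.span K (BSet K P mk) := by
  refine le_antisymm (Submodule.span_mono ?_) (Submodule.span_le.mpr ?_)
  · rintro _ ⟨q, rfl⟩
    exact ⟨q.1.1, q.1.2, q.2.1, rfl⟩
  · rintro _ ⟨i, j, hij, rfl⟩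
    by_cases him : i = mk.m j
    · simp [Bmat, him]
    · exact Submodule.subset_span ⟨⟨(i, j), hij, him⟩, rfl⟩

end Generators

section Decomposition

variable (K : Type) [Field K] {n : ℕ} (P : PosetOn n) (mk : MinimalMarking P)

theorem epsMat_apply_self {j : Fin n} (hj : ¬ P.IsMin j) (a : Fin n) :
    epsMat K P mk j a a = if j = a then 1 else 0 := by
  have hm : ¬ (j = a ∧ mk.m j = a) := by rintro ⟨rfl, h⟩; exact mk.m_ne_self hj h
  simp [epsMat, single_apply, hm]

open Classical in
theorem eps0Mat_apply_self (a : Fin n) : eps0Mat K P mk a a = if P.IsMin a then 1 else 0 := by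
  simp only [eps0Mat, Matrix.sub_apply, one_apply_eq, Matrix.sum_apply]
  rw [Finset.sum_congr rfl fun j hj => epsMat_apply_self K P mk (Finset.mem_filter.mp hj).2 a]
  by_cases ha : P.IsMin a <;> simp [ha]

theorem span_idemSet_le_KPone :
    Submodule.span K (idemSet K P mk) ≤ Subalgebra.toSubmodule (KPone K P) := by
  have heps : ∀ j, epsMat K P mk j ∈ KPone K P :=
    fun j => single_sub_single_m_mem_KPone K P mk (P.le_refl j)
  refine Submodule.span_le.mpr ?_
  rintro _ (rfl | ⟨j, -, rfl⟩) <;> rw [SetLike.mem_coe, Subalgebra.mem_toSubmodule]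
  · exact sub_mem (one_mem _) (sum_mem fun j _ => heps j)
  · exact heps j

open Classical in
noncomputable def idemProj (hn : 0 < n) :
    Matrix (Fin n) (Fin n) K →ₗ[K] Matrix (Fin n) (Fin n) K :=
  (entryLinearMap K K ⟨0, hn⟩ ⟨0, hn⟩).smulRight (eps0Mat K P mk) +
    ∑ j ∈ Finset.univ.filter (fun j => ¬ P.IsMin j),
      (entryLinearMap K K j j).smulRight (epsMat K P mk j)

variable {K P mk}

open Classical in
theorem idemProj_apply (hn : 0 < n) (M : Matrix (Fin n) (Fin n) K) :
    idemProj K P mk hn M = M ⟨0, hn⟩ ⟨0, hn⟩ • eps0Mat K P mk +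
      ∑ j ∈ Finset.univ.filter (fun j => ¬ P.IsMin j), M j j • epsMat K P mk j := by
  simp [idemProj]

theorem idemProj_mem_span (hn : 0 < n) (M : Matrix (Fin n) (Fin n) K) :
    idemProj K P mk hn M ∈ Submodule.span K (idemSet K P mk) := by
  classical
  rw [idemProj_apply]
  refine add_mem (Submodule.smul_mem _ _ (Submodule.subset_span (Set.mem_insert _ _)))
    (sum_mem fun j hj => Submodule.smul_mem _ _ (Submodule.subset_span ?_))
  exact Set.mem_insert_of_mem _ ⟨j, (Finset.mem_filter.mp hj).2, rfl⟩

open Classical in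
theorem idemProj_eq_zero_of_mem_KPoneRad (hn : 0 < n) {M : Matrix (Fin n) (Fin n) K}
    (hM : M ∈ KPoneRad K P) : idemProj K P mk hn M = 0 := by
  simp [idemProj_apply, (mem_KPoneRad.mp hM).2]

theorem idemProj_eq_self_of_mem_span (hn : 0 < n) {M : Matrix (Fin n) (Fin n) K}
    (hM : M ∈ Submodule.span K (idemSet K P mk)) : idemProj K P mk hn M = M := by
  classical
  have h0 := P.isMin_zero hn
  induction hM using Submodule.span_induction with
  | mem x hx =>
    rcases hx with rfl | ⟨j, hj, rfl⟩
    · rw [idemProj_apply, eps0Mat_apply_self, if_pos h0, one_smul, add_eq_left]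
      refine Finset.sum_eq_zero fun j hj => ?_
      rw [eps0Mat_apply_self, if_neg (Finset.mem_filter.mp hj).2, zero_smul]
    · have hj0 : j ≠ ⟨0, hn⟩ := by rintro rfl; exact hj h0
      simp [idemProj_apply, epsMat_apply_self K P mk hj, hj0, hj, ite_smul]
  | zero => exact map_zero _
  | add x y _ _ hx hy => rw [map_add, hx, hy]
  | smul c x _ hx => rw [map_smul, hx]

open Classical in
theorem idemProj_apply_self (hn : 0 < n) (M : Matrix (Fin n) (Fin n) K) (a : Fin n) :
    idemProj K P mk hn M a a = if P.IsMin a then M ⟨0, hn⟩ ⟨0, hn⟩ else M a a := by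
  rw [idemProj_apply, Matrix.add_apply, Matrix.sum_apply, Matrix.smul_apply, eps0Mat_apply_self,
    Finset.sum_congr rfl fun j hj => by
      rw [Matrix.smul_apply, epsMat_apply_self K P mk (Finset.mem_filter.mp hj).2, smul_ite,
        smul_zero]]
  by_cases ha : P.IsMin a <;> simp [ha]

theorem idemProj_apply_self_of_mem_KPone (hn : 0 < n) {M : Matrix (Fin n) (Fin n) K}
    (hM : M ∈ KPone K P) (a : Fin n) : idemProj K P mk hn M a a = M a a := by
  obtain ⟨hsupp, c, hc⟩ := hM
  rw [idemProj_apply_self]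
  split_ifs with ha
  · rw [← mulVec_one_apply_of_isMin hsupp ha, ← mulVec_one_apply_of_isMin hsupp (P.isMin_zero hn),
      hc]
  · rfl

theorem sub_idemProj_mem_KPoneRad (hn : 0 < n) {M : Matrix (Fin n) (Fin n) K}
    (hM : M ∈ KPone K P) : M - idemProj K P mk hn M ∈ KPoneRad K P :=
  mem_KPoneRad.mpr ⟨sub_mem hM (span_idemSet_le_KPone K P mk (idemProj_mem_span hn M)),
    fun a => by rw [Matrix.sub_apply, idemProj_apply_self_of_mem_KPone hn hM, sub_self]⟩

variable (K P mk)

theorem span_idemSet_inf_KPoneRad (hn : 0 < n) :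
    Submodule.span K (idemSet K P mk) ⊓ KPoneRad K P = ⊥ := by
  refine eq_bot_iff.mpr fun M hM => ?_
  obtain ⟨hidem, hrad⟩ := Submodule.mem_inf.mp hM
  rw [Submodule.mem_bot, ← idemProj_eq_self_of_mem_span hn hidem,
    idemProj_eq_zero_of_mem_KPoneRad hn hrad]

theorem span_idemSet_sup_KPoneRad (hn : 0 < n) :
    Submodule.span K (idemSet K P mk) ⊔ KPoneRad K P = Subalgebra.toSubmodule (KPone K P) := by
  refine le_antisymm (sup_le (span_idemSet_le_KPone K P mk) inf_le_left) fun M hM => ?_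
  rw [← add_sub_cancel (idemProj K P mk hn M) M]
  exact Submodule.add_mem_sup (idemProj_mem_span hn M) (sub_idemProj_mem_KPoneRad hn hM)

end Decomposition

/-- The Jacobson radical of `K¹𝒫` is the span of the `B_{ji}` (`i ≺ j`); the `B_{ji}` with
`i ≺ j`, `i ≠ m(j)` form a `K`-basis of it; and `K¹𝒫 = span{ε₀, ε_j} ⊕ rad K¹𝒫`. -/
theorem stmt3 (K : Type) [Field K] (n : ℕ) (hn : 1 ≤ n) (P : PosetOn n)
    (mk : MinimalMarking P)
    (Kone : Subalgebra K (Matrix (Fin n) (Fin n) K))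
    (hKone : (Kone : Set (Matrix (Fin n) (Fin n) K)) = KPoneSet K P) :
    -- the Jacobson radical of the ring `K¹𝒫` equals the span of the `B_{ji}`, `i ≺ j`
    (∀ x : Kone, x ∈ Ideal.jacobson (⊥ : Ideal Kone) ↔
      (x : Matrix (Fin n) (Fin n) K) ∈ Submodule.span K (BSet K P mk)) ∧
    -- the `B_{ji}` with `i ≺ j`, `i ≠ m(j)` form a `K`-basis of this radical
    LinearIndependent K (Bfam K P mk) ∧
    Submodule.span K (Set.range (Bfam K P mk)) = Submodule.span K (BSet K P mk) ∧
    -- internal direct sum decomposition of `K¹𝒫`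
    Submodule.span K (idemSet K P mk) ⊓ Submodule.span K (BSet K P mk) = ⊥ ∧
    ((Submodule.span K (idemSet K P mk) ⊔ Submodule.span K (BSet K P mk) :
        Submodule K (Matrix (Fin n) (Fin n) K)) : Set (Matrix (Fin n) (Fin n) K))
      = KPoneSet K P := by
  obtain rfl : Kone = KPone K P := SetLike.coe_injective hKone
  refine ⟨?_, linearIndependent_Bfam K P mk, span_range_Bfam K P mk, ?_, ?_⟩ <;>
    rw [span_BSet_eq]
  · exact mem_jacobson_bot_KPone_iff K P
  · exact span_idemSet_inf_KPoneRad K P mk hn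
  · rw [span_idemSet_sup_KPoneRad K P mk hn]
    rfl
end

section
/- For every k ∈ 𝒫 the left L-module Hom_{A₂}(L, S_A(k)) of A₂-linear maps is isomorphic to D(I_k L); moreover Hom_{A₂}(L, S_A(0)) is one-dimensional over K and isomorphic as a left L-module to S₀. -/
/-!
For `S_A(k)`: `I_k ∈ A₂` has `τ_k(I_k) = 1` and `I_k b = τ_k(b) I_k` for `b ∈ A₂`, so
`ψ(y) = ψ(I_k y)` and `ψ` is the same thing as its restriction to `I_k L`, i.e. an element of
`D(I_k L)`; right multiplication by `L` matches on both sides.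

For `S_A(0)`: `x − σ(x)·1 = (1 0; 0 0)(x − σ(x)·1) + (0 0; 1 0)(c, d − σ(x)·Id; 0, 0)` for
`x = (a b; c d)`, and the second factor lies in `L` because `d − σ(x)·Id` kills `𝟙`. Both left
factors lie in `ker τ₀`, so every `ψ` vanishes on `x − σ(x)·1` and `ψ ↦ ψ(1)` identifies
`Hom_{A₂}(L, S_A(0))` with `S₀`.
-/

open Matrix

set_option synthInstance.maxHeartbeats 1000000
set_option maxHeartbeats 2000000

/-- The row-centralized subspace `K₀¹𝒫`. -/
def KP0Set (K : Type) [Field K] {n : ℕ} (P : PosetOn n) : Set (Matrix (Fin n) (Fin n) K) :=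
  {M | M ∈ KPset K P ∧ M *ᵥ (fun _ => 1) = 0}

/-- The matrix model of the left Burt–Butler algebra. -/
def LSet (K : Type) [Field K] {n : ℕ} (P : PosetOn n) :
    Set (Matrix (Fin n ⊕ Fin n) (Fin n ⊕ Fin n) K) :=
  {X | X.toBlocks₁₁ ∈ KPset K P ∧ X.toBlocks₁₂ ∈ KP0Set K P ∧
       X.toBlocks₂₁ ∈ KPset K P ∧ X.toBlocks₂₂ ∈ KPoneSet K P}
section GenericModules

/-- `A₂`: block matrices `(r 0; s λ·Id_n)` with `r, s` diagonal. -/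
def A2Set (K : Type) [Field K] (n : ℕ) : Set (Matrix (Fin n ⊕ Fin n) (Fin n ⊕ Fin n) K) :=
  {X | (∃ r : Fin n → K, X.toBlocks₁₁ = Matrix.diagonal r) ∧ X.toBlocks₁₂ = 0 ∧
       (∃ s : Fin n → K, X.toBlocks₂₁ = Matrix.diagonal s) ∧
       ∃ c : K, X.toBlocks₂₂ = c • (1 : Matrix (Fin n) (Fin n) K)}

section DualGeneric

variable {K : Type} [Field K] {A : Type} [Ring A] [Algebra K A]

/-- The right ideal `e A = {u ∈ A : e u = u}` (for `e` idempotent), as a `K`-subspace. -/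
def cornerRight (e : A) : Submodule K A where
  carrier := {u | e * u = u}
  add_mem' := by
    intro a b ha hb
    show e * (a + b) = a + b
    rw [mul_add, ha, hb]
  zero_mem' := mul_zero _
  smul_mem' := by
    intro c u hu
    show e * (c • u) = c • u
    rw [mul_smul_comm, hu]

/-- Right multiplication by `x ∈ A` on `e A`, as a `K`-linear map. -/
def rmulCorner (e : A) (x : A) : ↥(cornerRight (K := K) e) →ₗ[K] ↥(cornerRight (K := K) e) where
  toFun u := ⟨u.1 * x, by
    have h : e * u.1 = u.1 := u.2
    show e * (u.1 * x) = u.1 * x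
    rw [← mul_assoc, h]⟩
  map_add' u v := by
    apply Subtype.ext
    show (u.1 + v.1) * x = u.1 * x + v.1 * x
    rw [add_mul]
  map_smul' c u := by
    apply Subtype.ext
    show (c • u.1) * x = c • (u.1 * x)
    rw [smul_mul_assoc]

/-- The `K`-linear dual `D(e A)`. -/
abbrev DualMod (e : A) : Type _ := Module.Dual K ↥(cornerRight (K := K) e)

/-- The left `A`-module structure on `D(e A)`: `(x·φ)(u) = φ(u x)`. -/
noncomputable instance dualModule (e : A) : Module A (DualMod (K := K) e) where
  smul x φ := φ ∘ₗ rmulCorner e x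
  one_smul φ := LinearMap.ext fun u => by
    show φ (rmulCorner e 1 u) = φ u
    congr 1
    exact Subtype.ext (mul_one _)
  mul_smul x y φ := LinearMap.ext fun u => by
    show φ (rmulCorner e (x * y) u) = φ (rmulCorner e y (rmulCorner e x u))
    congr 1
    exact Subtype.ext (mul_assoc _ _ _).symm
  smul_zero x := rfl
  smul_add x φ ψ := rfl
  add_smul x y φ := LinearMap.ext fun u => by
    show φ (rmulCorner e (x + y) u) = φ (rmulCorner e x u) + φ (rmulCorner e y u)
    rw [← map_add]
    congr 1
    exact Subtype.ext (by show u.1 * (x + y) = u.1 * x + u.1 * y; rw [mul_add])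
  zero_smul φ := LinearMap.ext fun u => by
    show φ (rmulCorner e 0 u) = 0
    have h : rmulCorner e 0 u = 0 := Subtype.ext (mul_zero _)
    rw [h, map_zero]

/-- `K` viewed as a left module over `A` via an algebra character `σ : A → K`. -/
def Twist (K : Type) [Field K] {A : Type} [Ring A] [Algebra K A] (σ : A →ₐ[K] K) : Type := K

instance (σ : A →ₐ[K] K) : AddCommGroup (Twist K σ) := inferInstanceAs (AddCommGroup K)

instance (σ : A →ₐ[K] K) : Module A (Twist K σ) := Module.compHom K σ.toRingHom

instance (σ : A →ₐ[K] K) : Module K (Twist K σ) := inferInstanceAs (Module K K)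

instance (σ : A →ₐ[K] K) : SMulCommClass A K (Twist K σ) :=
  ⟨fun a c t => by
    have t' : K := t
    show σ a * (c * (show K from t)) = c * (σ a * (show K from t))
    ring⟩

end DualGeneric

section CoInduced

variable {K : Type} [Field K] {A B : Type} [Ring A] [Algebra K A] [Ring B] [Algebra K B]
variable (inc : B →ₐ[K] A)

/-- `A` as a left `B`-module via the embedding `inc`. -/
def IndMod : Module B A := Module.compHom A inc.toRingHom

/-- The space of `B`-linear maps `Hom_B(A, N)` (where `A` is a `B`-module via `inc`). -/
abbrev CoIndHom (N : Type) [AddCommGroup N] [Module B N] : Type :=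
  @LinearMap B B _ _ (RingHom.id B) A N _ _ (IndMod inc) _

variable (N : Type) [AddCommGroup N] [Module B N]

/-- Right multiplication by `x : A` as a `B`-linear endomorphism of `A`. -/
def rmulInd (x : A) : @LinearMap B B _ _ (RingHom.id B) A A _ _ (IndMod inc) (IndMod inc) :=
  letI := IndMod inc
  { toFun := fun y => y * x
    map_add' := fun y z => add_mul y z x
    map_smul' := fun b y => by
      show (inc b * y) * x = inc b * (y * x)
      rw [mul_assoc] }

/-- The left `A`-module structure on `Hom_B(A, N)`: `(x·φ)(y) = φ(y x)`. -/
noncomputable instance coIndModule : Module A (CoIndHom inc N) where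
  smul x φ := LinearMap.comp φ (rmulInd inc x)
  one_smul φ := by
    letI := IndMod inc
    refine LinearMap.ext fun y => ?_
    show φ (rmulInd inc 1 y) = φ y
    congr 1
    exact mul_one y
  mul_smul x y φ := by
    letI := IndMod inc
    refine LinearMap.ext fun z => ?_
    show φ (rmulInd inc (x * y) z) = φ (rmulInd inc y (rmulInd inc x z))
    congr 1
    exact (mul_assoc z x y).symm
  smul_zero x := rfl
  smul_add x φ ψ := rfl
  add_smul x y φ := by
    letI := IndMod inc
    refine LinearMap.ext fun z => ?_
    show φ (rmulInd inc (x + y) z) = φ (rmulInd inc x z) + φ (rmulInd inc y z)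
    rw [← map_add]
    congr 1
    exact mul_add z x y
  zero_smul φ := by
    letI := IndMod inc
    refine LinearMap.ext fun z => ?_
    show φ (rmulInd inc 0 z) = 0
    have h : rmulInd inc 0 z = 0 := mul_zero z
    rw [h, map_zero]

end CoInduced

section CoInducedCharacter

variable {K : Type} [Field K] {A B : Type} [Ring A] [Algebra K A] [Ring B] [Algebra K B]
  {inc : B →ₐ[K] A}

theorem Twist.smul_def {C : Type} [Ring C] [Algebra K C] (τ : C →ₐ[K] K) (c : C)
    (t : Twist K τ) : c • t = (τ c * (show K from t) : K) := rfl

theorem CoIndHom.map_inc_mul {N : Type} [AddCommGroup N] [Module B N] (ψ : CoIndHom inc N)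
    (b : B) (y : A) : ψ (inc b * y) = b • ψ y := by
  let _ := IndMod inc
  exact ψ.map_smul b y

theorem CoIndHom.map_smul_of_twist {τ : B →ₐ[K] K} (ψ : CoIndHom inc (Twist K τ)) (c : K)
    (y : A) : ψ (c • y) = c • ψ y := by
  rw [Algebra.smul_def, ← inc.commutes, ψ.map_inc_mul, Twist.smul_def, AlgHom.commutes]
  rfl

noncomputable def coIndHomEquivDual (τ : B →ₐ[K] K) (b₀ : B) (hτb₀ : τ b₀ = 1)
    (hcomm : ∀ c : B, inc b₀ * inc c = τ c • inc b₀) :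
    CoIndHom inc (Twist K τ) ≃ₗ[A] DualMod (K := K) (inc b₀) := by
  letI := IndMod inc
  set e := inc b₀
  have he : e * e = e := by rw [hcomm, hτb₀, one_smul]
  have hmem : ∀ y : A, e * (e * y) = e * y := fun y => by rw [← mul_assoc, he]
  exact
  { toFun := fun ψ =>
      { toFun := fun u => (show K from ψ u.1)
        map_add' := fun u v => ψ.map_add u.1 v.1
        map_smul' := fun c u => ψ.map_smul_of_twist c u.1 }
    invFun := fun φ =>
      { toFun := fun y => (show Twist K τ from φ ⟨e * y, hmem y⟩)
        map_add' := fun y z => by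
          have h : (⟨e * (y + z), hmem _⟩ : cornerRight (K := K) e)
              = ⟨e * y, hmem y⟩ + ⟨e * z, hmem z⟩ := Subtype.ext (mul_add e y z)
          show φ _ = φ _ + φ _
          rw [h, map_add]
        map_smul' := fun b y => by
          have h : (⟨e * (inc b * y), hmem _⟩ : cornerRight (K := K) e)
              = τ b • ⟨e * y, hmem y⟩ := by
            refine Subtype.ext ?_
            show e * (inc b * y) = τ b • (e * y)
            rw [← mul_assoc, hcomm, smul_mul_assoc]
          show φ ⟨e * (inc b * y), hmem _⟩ = τ b * φ ⟨e * y, hmem y⟩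
          rw [h, map_smul, smul_eq_mul] }
    map_add' := fun _ _ => rfl
    map_smul' := fun _ _ => rfl
    left_inv := fun ψ => LinearMap.ext fun y => by
      show ψ (e * y) = ψ y
      rw [ψ.map_inc_mul, Twist.smul_def, hτb₀, one_mul]
    right_inv := fun φ => LinearMap.ext fun u => congrArg φ (Subtype.ext u.2) }

def incKerRightIdeal (inc : B →ₐ[K] A) (τ : B →ₐ[K] K) : Submodule K A :=
  Submodule.span K {z | ∃ b y, τ b = 0 ∧ z = inc b * y}

theorem CoIndHom.eq_zero_of_mem_incKerRightIdeal {τ : B →ₐ[K] K}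
    (ψ : CoIndHom inc (Twist K τ)) {z : A} (hz : z ∈ incKerRightIdeal inc τ) :
    (show K from ψ z) = 0 := by
  let _ := IndMod inc
  induction hz using Submodule.span_induction with
  | mem z hz =>
    obtain ⟨b, y, hb, rfl⟩ := hz
    rw [ψ.map_inc_mul, Twist.smul_def, hb, zero_mul]
  | zero => exact ψ.map_zero
  | add x y _ _ hx hy =>
    show (ψ (x + y) : K) = 0
    rw [ψ.map_add]
    exact (congrArg₂ (· + ·) hx hy).trans (add_zero 0)
  | smul c x _ hx =>
    show (ψ (c • x) : K) = 0
    rw [ψ.map_smul_of_twist]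
    show c * (show K from ψ x) = 0
    rw [hx, mul_zero]

section

variable {τ : B →ₐ[K] K} {σ : A →ₐ[K] K}

theorem CoIndHom.apply_eq_mul_apply_one
    (hspan : ∀ x : A, x - σ x • 1 ∈ incKerRightIdeal inc τ) (ψ : CoIndHom inc (Twist K τ))
    (x : A) : (show K from ψ x) = σ x * (show K from ψ 1) := by
  let _ := IndMod inc
  have h := ψ.eq_zero_of_mem_incKerRightIdeal (hspan x)
  rw [ψ.map_sub, ψ.map_smul_of_twist] at h
  exact sub_eq_zero.mp h

noncomputable def coIndHomEquivTwist (hσ : σ.comp inc = τ)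
    (hspan : ∀ x : A, x - σ x • 1 ∈ incKerRightIdeal inc τ) :
    CoIndHom inc (Twist K τ) ≃ₗ[A] Twist K σ := by
  let _ := IndMod inc
  exact
  { toFun := fun ψ => (show K from ψ 1)
    invFun := fun t =>
      { toFun := fun y => (σ y * (show K from t) : K)
        map_add' := fun y z => by
          show σ (y + z) * (show K from t) = σ y * (show K from t) + σ z * (show K from t)
          rw [map_add, add_mul]
        map_smul' := fun b y => by
          show σ (inc b * y) * (show K from t) = τ b * (σ y * (show K from t))
          rw [map_mul, ← hσ, AlgHom.comp_apply, mul_assoc] }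
    map_add' := fun _ _ => rfl
    map_smul' := fun x ψ => by
      show (show K from ψ (1 * x)) = σ x * (show K from ψ 1)
      rw [one_mul]
      exact ψ.apply_eq_mul_apply_one hspan x
    left_inv := fun ψ => LinearMap.ext fun y => (ψ.apply_eq_mul_apply_one hspan y).symm
    right_inv := fun t => by
      show σ 1 * (show K from t) = t
      rw [map_one, one_mul] }

noncomputable def coIndHomEquivSelf (hσ : σ.comp inc = τ)
    (hspan : ∀ x : A, x - σ x • 1 ∈ incKerRightIdeal inc τ) :
    CoIndHom inc (Twist K τ) ≃ₗ[K] K :=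
  { coIndHomEquivTwist hσ hspan with map_smul' := fun _ _ => rfl }

theorem finrank_coIndHom_eq_one (hσ : σ.comp inc = τ)
    (hspan : ∀ x : A, x - σ x • 1 ∈ incKerRightIdeal inc τ) :
    Module.finrank K (CoIndHom inc (Twist K τ)) = 1 :=
  (coIndHomEquivSelf hσ hspan).finrank_eq.trans (Module.finrank_self K)

end

end CoInducedCharacter

section BurtButler

variable {K : Type} [Field K] {n : ℕ}

local notation "𝕄" => Matrix (Fin n ⊕ Fin n) (Fin n ⊕ Fin n) K

theorem nonempty_of_subalgebra_algHom {ι : Type} [Fintype ι] [DecidableEq ι]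
    {S : Subalgebra K (Matrix ι ι K)} (f : S →ₐ[K] K) : Nonempty ι := by
  by_contra hι
  have : IsEmpty ι := not_nonempty_iff.mp hι
  have h : (1 : S) = 0 := Subtype.ext (Subsingleton.elim _ _)
  simpa using congrArg f h

theorem sub_smul_one_eq_fromBlocks {ι α : Type} [Fintype ι] [DecidableEq ι] [CommRing α]
    (X : Matrix (ι ⊕ ι) (ι ⊕ ι) α) (c : α) :
    X - c • 1 = fromBlocks 1 0 0 0 * (X - c • 1)
      + fromBlocks 0 0 1 0 * fromBlocks X.toBlocks₂₁ (X.toBlocks₂₂ - c • 1) 0 0 := by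
  obtain ⟨a, b, c', d, rfl⟩ : ∃ a b c' d, X = fromBlocks a b c' d :=
    ⟨_, _, _, _, X.fromBlocks_toBlocks.symm⟩
  rw [← fromBlocks_one, fromBlocks_smul]
  simp [fromBlocks_multiply, sub_eq_add_neg, fromBlocks_neg, fromBlocks_add]

theorem single_one_mul_diagonal {ι α : Type} [Fintype ι] [DecidableEq ι] [Semiring α]
    (k : ι) (r : ι → α) : single k k 1 * diagonal r = single k k (r k) := by
  ext i j
  rw [mul_diagonal, single_apply, single_apply]
  split_ifs with h
  · rw [← h.2, one_mul]
  · rw [zero_mul]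

theorem fromBlocks_diagonal_mem_A2Set (r s : Fin n → K) :
    fromBlocks (diagonal r) 0 (diagonal s) 0 ∈ A2Set K n :=
  ⟨⟨r, by simp⟩, by simp, ⟨s, by simp⟩, 0, by simp⟩

theorem fromBlocks_single_mul_of_mem_A2Set {X : 𝕄}
    (hX : X ∈ A2Set K n) (k : Fin n) :
    fromBlocks (single k k 1) 0 0 0 * X
      = X (.inl k) (.inl k) • fromBlocks (single k k 1) 0 0 0 := by
  obtain ⟨⟨r, hr⟩, h₁₂, -, -⟩ := hX
  have hk : X (.inl k) (.inl k) = r k := by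
    rw [show X (.inl k) (.inl k) = X.toBlocks₁₁ k k from rfl, hr, diagonal_apply_eq]
  conv_lhs => rw [← X.fromBlocks_toBlocks]
  rw [hk, hr, h₁₂, fromBlocks_multiply, fromBlocks_smul]
  simp [smul_single, single_one_mul_diagonal]

theorem toBlocks₂₂_mulVec_one_of_mem_A2Set {X : 𝕄}
    (hX : X ∈ A2Set K n) (i : Fin n) :
    X.toBlocks₂₂ *ᵥ (fun _ => 1) = fun _ => X (.inr i) (.inr i) := by
  obtain ⟨-, -, -, c, hc⟩ := hX
  have hi : X (.inr i) (.inr i) = c := by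
    rw [show X (.inr i) (.inr i) = X.toBlocks₂₂ i i from rfl, hc, Matrix.smul_apply,
      one_apply_eq, smul_eq_mul, mul_one]
  rw [hi, hc, smul_mulVec, one_mulVec]
  funext
  simp

theorem fromBlocks_lowerRow_mem_LSet {P : PosetOn n}
    {X : 𝕄} (hX : X ∈ LSet K P) {c : K}
    (hc : X.toBlocks₂₂ *ᵥ (fun _ => 1) = fun _ => c) :
    fromBlocks X.toBlocks₂₁ (X.toBlocks₂₂ - c • 1) 0 0 ∈ LSet K P := by
  obtain ⟨-, -, h₂₁, h₂₂, -⟩ := hX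
  have hzero : (0 : Matrix (Fin n) (Fin n) K) ∈ KPset K P := fun _ _ h => (h rfl).elim
  refine ⟨by simpa using h₂₁, ⟨fun j i hji => ?_, ?_⟩, by simpa using hzero,
    ⟨by simpa using hzero, 0, by simp; rfl⟩⟩
  · by_cases hij : i = j
    · exact hij ▸ P.le_refl i
    · refine h₂₂ j i fun h => hji ?_
      simp [h, one_apply, Ne.symm hij]
  · rw [toBlocks_fromBlocks₁₂, sub_mulVec, smul_mulVec, one_mulVec, hc]
    funext
    simp

variable {L A2 : Subalgebra K (Matrix (Fin n ⊕ Fin n) (Fin n ⊕ Fin n) K)}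

def diagA2 (hA2 : (A2 : Set 𝕄) = A2Set K n)
    (r s : Fin n → K) : A2 :=
  ⟨fromBlocks (diagonal r) 0 (diagonal s) 0,
    by rw [← SetLike.mem_coe, hA2]; exact fromBlocks_diagonal_mem_A2Set r s⟩

theorem nonempty_coIndHom_equiv_dual
    (hA2 : (A2 : Set 𝕄) = A2Set K n)
    {inc : A2 →ₐ[K] L} (hinc : ∀ b : A2, ((inc b : L) : 𝕄) = b) {k : Fin n} {e : L}
    (he : (e : 𝕄) = fromBlocks (single k k 1) 0 0 0) {τ : A2 →ₐ[K] K}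
    (hτ : ∀ X : A2, (X : 𝕄) (.inl k) (.inl k) = τ X) :
    Nonempty (CoIndHom inc (Twist K τ) ≃ₗ[L] DualMod (K := K) e) := by
  have hb₀ : inc (diagA2 hA2 (Pi.single k 1) 0) = e :=
    Subtype.ext (by rw [hinc, he, ← diagonal_single]; simp [diagA2])
  have hτb₀ : τ (diagA2 hA2 (Pi.single k 1) 0) = 1 := by
    rw [← hτ]
    simp [diagA2]
  have hcomm (c : A2) : e * inc c = τ c • e := by
    refine Subtype.ext ?_
    rw [MulMemClass.coe_mul, SetLike.val_smul, hinc, he, ← hτ]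
    exact fromBlocks_single_mul_of_mem_A2Set (hA2 ▸ c.2) k
  rw [← hb₀] at hcomm ⊢
  exact ⟨coIndHomEquivDual τ _ hτb₀ hcomm⟩

theorem algHom_comp_inc_eq
    (hA2 : (A2 : Set 𝕄) = A2Set K n)
    {inc : A2 →ₐ[K] L} (hinc : ∀ b : A2, ((inc b : L) : 𝕄) = b) {τ₀ : A2 →ₐ[K] K}
    (hτ₀ : ∀ (X : A2) (i : Fin n), (X : 𝕄) (.inr i) (.inr i) = τ₀ X)
    {σ : L →ₐ[K] K}
    (hσ : ∀ X : L, (X : 𝕄).toBlocks₂₂ *ᵥ (fun _ => 1) = fun _ => σ X) :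
    σ.comp inc = τ₀ := AlgHom.ext fun b => by
  obtain ⟨i⟩ : Nonempty (Fin n) := by simpa using nonempty_of_subalgebra_algHom τ₀
  have h := congrFun (hσ (inc b)) i
  rw [hinc, toBlocks₂₂_mulVec_one_of_mem_A2Set (hA2 ▸ b.2) i, hτ₀] at h
  exact h.symm

theorem sub_smul_one_mem_incKerRightIdeal {P : PosetOn n}
    (hL : (L : Set 𝕄) = LSet K P)
    (hA2 : (A2 : Set 𝕄) = A2Set K n)
    {inc : A2 →ₐ[K] L} (hinc : ∀ b : A2, ((inc b : L) : 𝕄) = b) {τ₀ : A2 →ₐ[K] K}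
    (hτ₀ : ∀ (X : A2) (i : Fin n), (X : 𝕄) (.inr i) (.inr i) = τ₀ X)
    {σ : L →ₐ[K] K}
    (hσ : ∀ X : L, (X : 𝕄).toBlocks₂₂ *ᵥ (fun _ => 1) = fun _ => σ X)
    (x : L) : x - σ x • 1 ∈ incKerRightIdeal inc τ₀ := by
  obtain ⟨i⟩ : Nonempty (Fin n) := by simpa using nonempty_of_subalgebra_algHom τ₀
  have hτ₀_diagA2 (r s : Fin n → K) : τ₀ (diagA2 hA2 r s) = 0 := by
    rw [← hτ₀ _ i]
    simp [diagA2]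
  let y : L := ⟨_, by
    rw [← SetLike.mem_coe, hL]; exact fromBlocks_lowerRow_mem_LSet (hL ▸ x.2) (hσ x)⟩
  have hx :
      x - σ x • 1 = inc (diagA2 hA2 1 0) * (x - σ x • 1) + inc (diagA2 hA2 0 1) * y := by
    refine Subtype.ext ?_
    simp only [AddMemClass.coe_add, MulMemClass.coe_mul, hinc]
    simpa [diagA2, y] using sub_smul_one_eq_fromBlocks (x : 𝕄) (σ x)
  rw [hx]
  exact add_mem (Submodule.subset_span ⟨_, _, hτ₀_diagA2 1 0, rfl⟩)
    (Submodule.subset_span ⟨_, _, hτ₀_diagA2 0 1, rfl⟩)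

end BurtButler

theorem stmt19_general {K : Type} [Field K] {n : ℕ} (P : PosetOn n)
    (L : Subalgebra K (Matrix (Fin n ⊕ Fin n) (Fin n ⊕ Fin n) K))
    (hL : (L : Set (Matrix (Fin n ⊕ Fin n) (Fin n ⊕ Fin n) K)) = LSet K P)
    (A2 : Subalgebra K (Matrix (Fin n ⊕ Fin n) (Fin n ⊕ Fin n) K))
    (hA2 : (A2 : Set (Matrix (Fin n ⊕ Fin n) (Fin n ⊕ Fin n) K)) = A2Set K n)
    -- the inclusion `A₂ ⊆ L`
    (inc : A2 →ₐ[K] L)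
    (hinc : ∀ b : A2, ((inc b : L) : Matrix (Fin n ⊕ Fin n) (Fin n ⊕ Fin n) K)
      = (b : Matrix (Fin n ⊕ Fin n) (Fin n ⊕ Fin n) K))
    -- the idempotents `I_k = (E_{kk} 0; 0 0)`, as elements of `L`
    (II : Fin n → L)
    (hII : ∀ k, (II k : Matrix (Fin n ⊕ Fin n) (Fin n ⊕ Fin n) K)
      = Matrix.fromBlocks (Matrix.single k k 1) 0 0 0)
    -- the characters of `A₂` giving the simple modules `S_A(k)`, `k ∈ 𝒫`:
    -- `(r 0; s λ·Id)·t = r_{kk} t`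
    (τ : Fin n → (A2 →ₐ[K] K))
    (hτ : ∀ (k : Fin n) (X : A2),
      (X : Matrix (Fin n ⊕ Fin n) (Fin n ⊕ Fin n) K) (Sum.inl k) (Sum.inl k) = τ k X)
    -- the character of `A₂` giving `S_A(0)`: `(r 0; s λ·Id)·t = λ t`
    (τ0 : A2 →ₐ[K] K)
    (hτ0 : ∀ (X : A2) (i : Fin n),
      (X : Matrix (Fin n ⊕ Fin n) (Fin n ⊕ Fin n) K) (Sum.inr i) (Sum.inr i) = τ0 X)
    -- `σ : L → K`, `(a b; c d) ↦ λ` with `d𝟙 = λ𝟙`, giving the `L`-module `S₀`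
    (σ : L →ₐ[K] K)
    (hσ : ∀ X : L, (X : Matrix (Fin n ⊕ Fin n) (Fin n ⊕ Fin n) K).toBlocks₂₂
        *ᵥ (fun _ => (1 : K)) = fun _ => σ X) :
    (∀ k : Fin n,
      Nonempty ((CoIndHom inc (Twist K (τ k))) ≃ₗ[L] DualMod (K := K) (II k))) ∧
    Module.finrank K (CoIndHom inc (Twist K τ0)) = 1 ∧
    Nonempty ((CoIndHom inc (Twist K τ0)) ≃ₗ[L] Twist K σ) := by
  have hσ₀ := algHom_comp_inc_eq hA2 hinc hτ0 hσ
  have hspan := sub_smul_one_mem_incKerRightIdeal hL hA2 hinc hτ0 hσ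
  exact ⟨fun k => nonempty_coIndHom_equiv_dual hA2 hinc (hII k) (hτ k),
    finrank_coIndHom_eq_one hσ₀ hspan, ⟨coIndHomEquivTwist hσ₀ hspan⟩⟩

/-- For every `k ∈ 𝒫` the left `L`-module `Hom_{A₂}(L, S_A(k))` is isomorphic to `D(I_k L)`;
moreover `Hom_{A₂}(L, S_A(0))` is one-dimensional over `K` and isomorphic as a left
`L`-module to `S₀`. -/
theorem stmt19 {K : Type} [Field K] [IsAlgClosed K] {n : ℕ} (hn : 1 ≤ n) (P : PosetOn n)
    (L : Subalgebra K (Matrix (Fin n ⊕ Fin n) (Fin n ⊕ Fin n) K))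
    (hL : (L : Set (Matrix (Fin n ⊕ Fin n) (Fin n ⊕ Fin n) K)) = LSet K P)
    (A2 : Subalgebra K (Matrix (Fin n ⊕ Fin n) (Fin n ⊕ Fin n) K))
    (hA2 : (A2 : Set (Matrix (Fin n ⊕ Fin n) (Fin n ⊕ Fin n) K)) = A2Set K n)
    -- the inclusion `A₂ ⊆ L`
    (inc : A2 →ₐ[K] L)
    (hinc : ∀ b : A2, ((inc b : L) : Matrix (Fin n ⊕ Fin n) (Fin n ⊕ Fin n) K)
      = (b : Matrix (Fin n ⊕ Fin n) (Fin n ⊕ Fin n) K))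
    -- the idempotents `I_k = (E_{kk} 0; 0 0)`, as elements of `L`
    (II : Fin n → L)
    (hII : ∀ k, (II k : Matrix (Fin n ⊕ Fin n) (Fin n ⊕ Fin n) K)
      = Matrix.fromBlocks (Matrix.single k k 1) 0 0 0)
    -- the characters of `A₂` giving the simple modules `S_A(k)`, `k ∈ 𝒫`:
    -- `(r 0; s λ·Id)·t = r_{kk} t`
    (τ : Fin n → (A2 →ₐ[K] K))
    (hτ : ∀ (k : Fin n) (X : A2),
      (X : Matrix (Fin n ⊕ Fin n) (Fin n ⊕ Fin n) K) (Sum.inl k) (Sum.inl k) = τ k X)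
    -- the character of `A₂` giving `S_A(0)`: `(r 0; s λ·Id)·t = λ t`
    (τ0 : A2 →ₐ[K] K)
    (hτ0 : ∀ (X : A2) (i : Fin n),
      (X : Matrix (Fin n ⊕ Fin n) (Fin n ⊕ Fin n) K) (Sum.inr i) (Sum.inr i) = τ0 X)
    -- `σ : L → K`, `(a b; c d) ↦ λ` with `d𝟙 = λ𝟙`, giving the `L`-module `S₀`
    (σ : L →ₐ[K] K)
    (hσ : ∀ X : L, (X : Matrix (Fin n ⊕ Fin n) (Fin n ⊕ Fin n) K).toBlocks₂₂
        *ᵥ (fun _ => (1 : K)) = fun _ => σ X) :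
    (∀ k : Fin n,
      Nonempty ((CoIndHom inc (Twist K (τ k))) ≃ₗ[L] DualMod (K := K) (II k))) ∧
    Module.finrank K (CoIndHom inc (Twist K τ0)) = 1 ∧
    Nonempty ((CoIndHom inc (Twist K τ0)) ≃ₗ[L] Twist K σ) :=
  stmt19_general P L hL A2 hA2 inc hinc II hII τ hτ τ0 hτ0 σ hσ
end GenericModules
end
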